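/- arXiv:2306.00335 — 9 statements merged into one kernel-verified Lean document; each statement's English description precedes it below -/
import Mathlib

section
/- Let n : ℕ and let D : Fin n → Type be state spaces with each D i a nonempty finite type. Suppose pa : Fin n → Finset (Fin n) satisfies j < i for every j ∈ pa i, and f : (i : Fin n) → ((∀ j, D j) → ℝ≥0) is a family of factors such that each f i is local to insert i (pa i) and, for every assignment x and every i, ∑_{s : D i} f i (Function.update x i s) = 1. Then the product of all factors is a probability distribution: ∑ over all assignments x : ∀ j, D j of ∏_{i : Fin n} f i x equals 1. -/
/-!
In topological order the last variable `x (last n)` occurs in no factor but its own, so summing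
it out of the product leaves the product of the first `n` factors, now a network on the first
`n` variables; induction on `n` finishes. Acyclicity enters only through the weaker fact that
`f i` depends on the coordinates `j ≤ i` alone.
-/

/-- A factor `φ` is *local* to a set of variables `C` if it only depends on the
coordinates in `C`. -/
def IsLocal {n : ℕ} {D : Fin n → Type} (C : Finset (Fin n))
    (φ : (∀ j, D j) → NNReal) : Prop :=
  ∀ x y : ∀ j, D j, (∀ j ∈ C, x j = y j) → φ x = φ y

open Finset

theorem IsLocal.mono {n : ℕ} {D : Fin n → Type} {C C' : Finset (Fin n)}
    {φ : (∀ j, D j) → NNReal} (h : IsLocal C φ) (hC : C ⊆ C') : IsLocal C' φ :=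
  fun x y hxy => h x y fun j hj => hxy j (hC hj)

theorem Fin.sum_pi_eq_sum_sum_snoc {M : Type*} [AddCommMonoid M] {n : ℕ}
    {D : Fin (n + 1) → Type} [∀ i, Fintype (D i)] (F : (∀ j, D j) → M) :
    ∑ x, F x = ∑ x : ∀ j : Fin n, D j.castSucc, ∑ s, F (Fin.snoc x s) := by
  rw [← (Fin.snocEquiv D).sum_comp, Fintype.sum_prod_type_right]
  rfl

theorem IsLocal.snoc_congr {n : ℕ} {D : Fin (n + 1) → Type} {φ : (∀ j, D j) → NNReal}
    {i : Fin n} (h : IsLocal (Iic i.castSucc) φ) {x y : ∀ j : Fin n, D j.castSucc}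
    (hxy : ∀ j ≤ i, x j = y j) (s t : D (Fin.last n)) :
    φ (Fin.snoc x s) = φ (Fin.snoc y t) := by
  refine h _ _ fun j hj => ?_
  obtain ⟨j, rfl⟩ := Fin.exists_castSucc_eq.2
    (Fin.ne_last_of_lt ((mem_Iic.1 hj).trans_lt i.castSucc_lt_last))
  simpa using hxy j (mem_Iic.1 hj : j.castSucc ≤ i.castSucc)

theorem sum_prod_eq_one_of_isLocal_Iic :
    ∀ {n : ℕ} {D : Fin n → Type} [∀ i, Fintype (D i)] [∀ i, Nonempty (D i)]
      (f : Fin n → (∀ j, D j) → NNReal), (∀ i, IsLocal (Iic i) (f i)) →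
      (∀ (x : ∀ j, D j) (i : Fin n), ∑ s : D i, f i (Function.update x i s) = 1) →
      ∑ x : ∀ j, D j, ∏ i, f i x = 1
  | 0, _, _, _, _, _, _ => by simp
  | n + 1, D, _, _, f, hlocal, hnorm => by
    let z : D (Fin.last n) := Classical.arbitrary _
    let g : Fin n → (∀ j : Fin n, D j.castSucc) → NNReal := fun i x =>
      f i.castSucc (Fin.snoc x z)
    have hg_local (i : Fin n) : IsLocal (Iic i) (g i) := fun x y hxy =>
      (hlocal i.castSucc).snoc_congr (fun j hj => hxy j (mem_Iic.2 hj)) z z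
    have hg_norm (x : ∀ j : Fin n, D j.castSucc) (i : Fin n) :
        ∑ s, g i (Function.update x i s) = 1 := by
      simpa only [g, Fin.snoc_update] using hnorm (Fin.snoc x z) i.castSucc
    have hf_snoc (x : ∀ j : Fin n, D j.castSucc) (s : D (Fin.last n)) :
        ∏ i, f i (Fin.snoc x s) = (∏ i, g i x) * f (Fin.last n) (Fin.snoc x s) := by
      rw [Fin.prod_univ_castSucc]
      congr 1
      exact prod_congr rfl fun i _ => (hlocal i.castSucc).snoc_congr (fun _ _ => rfl) s z
    have hf_last (x : ∀ j : Fin n, D j.castSucc) : ∑ s, f (Fin.last n) (Fin.snoc x s) = 1 := by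
      simpa only [Fin.update_snoc_last] using hnorm (Fin.snoc x z) (Fin.last n)
    calc ∑ x, ∏ i, f i x
        = ∑ x : ∀ j : Fin n, D j.castSucc, ∑ s, ∏ i, f i (Fin.snoc x s) :=
          Fin.sum_pi_eq_sum_sum_snoc _
      _ = ∑ x, ∏ i, g i x := by simp_rw [hf_snoc, ← mul_sum, hf_last, mul_one]
      _ = 1 := sum_prod_eq_one_of_isLocal_Iic g hg_local hg_norm

/-- The product of the CPDs of a Bayesian network given in topological order is a
probability distribution: it sums to 1 over all assignments. -/
theorem bn_product_sums_to_one
    (n : ℕ) (D : Fin n → Type) [∀ i, Fintype (D i)] [∀ i, Nonempty (D i)]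
    (pa : Fin n → Finset (Fin n)) (hpa : ∀ i : Fin n, ∀ j ∈ pa i, j < i)
    (f : ∀ _ : Fin n, (∀ j, D j) → NNReal)
    (hlocal : ∀ i : Fin n, IsLocal (insert i (pa i)) (f i))
    (hnorm : ∀ (x : ∀ j, D j) (i : Fin n),
      ∑ s : D i, f i (Function.update x i s) = 1) :
    ∑ x : ∀ j, D j, ∏ i : Fin n, f i x = 1 := by
  have hparents (i : Fin n) : insert i (pa i) ⊆ Iic i :=
    insert_subset (mem_Iic.2 le_rfl) fun j hj => mem_Iic.2 (hpa i j hj).le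
  exact sum_prod_eq_one_of_isLocal_Iic f (fun i => (hlocal i).mono (hparents i)) hnorm
end

section
/- Let f : (i : Fin n) → ((∀ j, D j) → ℝ≥0) be the factors of a Bayesian network given in topological order with parent map pa. Then for every Finset E ⊆ Fin n (the evidence variables) and every assignment e : ∀ j, D j (the evidence states), the sum over all assignments x satisfying x j = e j for all j ∈ E of ∏_{i : Fin n} f i x is at most 1. -/
open Finset Function

section AgreeOutside

variable {ι : Type*} [Fintype ι] [DecidableEq ι] {D : ι → Type*} [∀ i, Fintype (D i)]
  [∀ i, DecidableEq (D i)]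

def agreeOutside (S : Finset ι) (e : ∀ j, D j) : Finset (∀ j, D j) :=
  univ.filter fun x => ∀ j ∉ S, x j = e j

@[simp]
theorem mem_agreeOutside {S : Finset ι} {e x : ∀ j, D j} :
    x ∈ agreeOutside S e ↔ ∀ j ∉ S, x j = e j := by
  simp [agreeOutside]

theorem agreeOutside_empty (e : ∀ j, D j) : agreeOutside ∅ e = {e} := by
  ext x
  simp [funext_iff]

theorem agreeOutside_univ (e : ∀ j, D j) : agreeOutside univ e = univ := by
  ext x
  simp

theorem sum_agreeOutside_insert {M : Type*} [AddCommMonoid M] {S : Finset ι} {i : ι}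
    (hi : i ∉ S) (e : ∀ j, D j) (ψ : (∀ j, D j) → M) :
    ∑ x ∈ agreeOutside (insert i S) e, ψ x =
      ∑ x ∈ agreeOutside S e, ∑ s, ψ (update x i s) := by
  rw [← sum_product' (f := fun x s => ψ (update x i s))]
  refine sum_nbij' (fun x => (update x i (e i), x i)) (fun p => update p.1 i p.2)
    ?_ ?_ ?_ ?_ fun _ _ => by simp
  · intro x hx
    simp only [mem_product, mem_agreeOutside, mem_univ, and_true] at hx ⊢
    intro j hj
    by_cases hji : j = i
    · subst hji; simp
    · simpa [hji] using hx j (by simp [hji, hj])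
  · rintro ⟨x, s⟩ hx
    simp only [mem_product, mem_agreeOutside, mem_univ, and_true] at hx ⊢
    intro j hj
    simp only [mem_insert, not_or] at hj
    simpa [hj.1] using hx j hj.2
  · intro x _
    simp
  · rintro ⟨x, s⟩ hx
    have hxi : x i = e i := mem_agreeOutside.mp (mem_product.mp hx).1 i hi
    simp [← hxi]

theorem sum_agreeOutside_insert_mul {R : Type*} [CommSemiring R] {S : Finset ι} {i : ι}
    (hi : i ∉ S) (e : ∀ j, D j) {f φ : (∀ j, D j) → R}
    (hf : ∀ x, ∑ s, f (update x i s) = 1) (hφ : ∀ x s, φ (update x i s) = φ x) :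
    ∑ x ∈ agreeOutside (insert i S) e, f x * φ x = ∑ x ∈ agreeOutside S e, φ x := by
  rw [sum_agreeOutside_insert hi]
  refine sum_congr rfl fun x _ => ?_
  simp only [hφ, ← sum_mul, hf, one_mul]

end AgreeOutside

variable {n : ℕ} {D : Fin n → Type}

theorem IsLocal.apply_update {C : Finset (Fin n)}
    {φ : (∀ j, D j) → NNReal} (hφ : IsLocal C φ) {i : Fin n} (hi : i ∉ C)
    (x : ∀ j, D j) (s : D i) : φ (update x i s) = φ x :=
  hφ _ _ fun _ hj => update_of_ne (ne_of_mem_of_not_mem hj hi) s x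

theorem sum_agreeOutside_prod_eq_one [∀ i, Fintype (D i)] [∀ i, DecidableEq (D i)]
    {pa : Fin n → Finset (Fin n)} (hpa : ∀ i, ∀ j ∈ pa i, j < i)
    {f : Fin n → (∀ j, D j) → NNReal} (hlocal : ∀ i, IsLocal (insert i (pa i)) (f i))
    (hnorm : ∀ x i, ∑ s : D i, f i (update x i s) = 1)
    (S : Finset (Fin n)) (hS : ∀ i ∈ S, pa i ⊆ S) (e : ∀ j, D j) :
    ∑ x ∈ agreeOutside S e, ∏ i ∈ S, f i x = 1 := by
  induction S using Finset.induction_on_max with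
  | empty => simp [agreeOutside_empty]
  | insert a S hlt ih =>
    have haS : a ∉ S := fun ha => lt_irrefl a (hlt a ha)
    have hS' : ∀ i ∈ S, pa i ⊆ S := fun i hi j hj =>
      (mem_insert.mp (hS i (mem_insert_of_mem hi) hj)).resolve_left
        (hpa i j hj |>.trans (hlt i hi)).ne
    have hfa : ∀ i ∈ S, a ∉ insert i (pa i) := by
      intro i hi ha
      rcases mem_insert.mp ha with rfl | ha
      · exact lt_irrefl a (hlt a hi)
      · exact lt_asymm (hpa i a ha) (hlt i hi)
    simp_rw [prod_insert haS]
    rw [sum_agreeOutside_insert_mul haS e (hnorm · a) fun x s =>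
      prod_congr rfl fun i hi => (hlocal i).apply_update (hfa i hi) x s]
    exact ih hS'

theorem bn_evidence_prob_le_one_general
    (n : ℕ) (D : Fin n → Type) [∀ i, Fintype (D i)]
    [∀ i, DecidableEq (D i)]
    (pa : Fin n → Finset (Fin n)) (hpa : ∀ i : Fin n, ∀ j ∈ pa i, j < i)
    (f : ∀ _ : Fin n, (∀ j, D j) → NNReal)
    (hlocal : ∀ i : Fin n, IsLocal (insert i (pa i)) (f i))
    (hnorm : ∀ (x : ∀ j, D j) (i : Fin n),
      ∑ s : D i, f i (Function.update x i s) = 1)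
    (E : Finset (Fin n)) (e : ∀ j, D j) :
    ∑ x ∈ Finset.univ.filter (fun x : ∀ j, D j => ∀ j ∈ E, x j = e j),
      ∏ i : Fin n, f i x ≤ 1 :=
  calc ∑ x ∈ univ.filter (fun x : ∀ j, D j => ∀ j ∈ E, x j = e j), ∏ i, f i x
      ≤ ∑ x, ∏ i, f i x := sum_le_sum_of_subset (filter_subset _ _)
    _ = ∑ x ∈ agreeOutside univ e, ∏ i, f i x := by rw [agreeOutside_univ]
    _ = 1 := sum_agreeOutside_prod_eq_one hpa hlocal hnorm univ (fun _ _ => subset_univ _) e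

/-- For a Bayesian network given in topological order, the probability of any
evidence states (the sum of the product of all CPDs over the assignments
consistent with the evidence) is at most 1. -/
theorem bn_evidence_prob_le_one
    (n : ℕ) (D : Fin n → Type) [∀ i, Fintype (D i)] [∀ i, Nonempty (D i)]
    [∀ i, DecidableEq (D i)]
    (pa : Fin n → Finset (Fin n)) (hpa : ∀ i : Fin n, ∀ j ∈ pa i, j < i)
    (f : ∀ _ : Fin n, (∀ j, D j) → NNReal)
    (hlocal : ∀ i : Fin n, IsLocal (insert i (pa i)) (f i))
    (hnorm : ∀ (x : ∀ j, D j) (i : Fin n),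
      ∑ s : D i, f i (Function.update x i s) = 1)
    (E : Finset (Fin n)) (e : ∀ j, D j) :
    ∑ x ∈ Finset.univ.filter (fun x : ∀ j, D j => ∀ j ∈ E, x j = e j),
      ∏ i : Fin n, f i x ≤ 1 :=
  bn_evidence_prob_le_one_general n D pa hpa f hlocal hnorm E e
end

section
/- Let f : (i : Fin n) → ((∀ j, D j) → ℝ≥0) be the factors of a Bayesian network given in topological order with parent map pa. Let A ⊆ Fin n be a parent-closed Finset and let x₀ : ∀ j, D j be any fixed reference assignment. Then the sum over all assignments x satisfying x j = x₀ j for all j ∉ A of ∏_{i ∈ A} f i x equals 1. -/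
open Finset Function

theorem sum_agreeOutside_insert_eq_sum_sum_update {ι : Type*} [Fintype ι] [DecidableEq ι]
    {D : ι → Type*} [∀ i, Fintype (D i)] [∀ i, DecidableEq (D i)]
    {M : Type*} [AddCommMonoid M]
    {B : Finset ι} {i : ι} (hi : i ∉ B) (x₀ : ∀ j, D j) (g : (∀ j, D j) → M) :
    ∑ x ∈ univ.filter (fun x : ∀ j, D j => ∀ j, j ∉ insert i B → x j = x₀ j), g x =
      ∑ y ∈ univ.filter (fun x : ∀ j, D j => ∀ j, j ∉ B → x j = x₀ j),
        ∑ s : D i, g (update y i s) := by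
  rw [← sum_product']
  symm
  refine sum_bij' (fun p _ => update p.1 i p.2) (fun x _ => (update x i (x₀ i), x i))
    ?_ ?_ ?_ ?_ fun _ _ => rfl
  · rintro ⟨y, s⟩ hy
    simp only [mem_product, mem_filter, mem_univ, true_and, and_true] at hy ⊢
    intro j hj
    rw [mem_insert, not_or] at hj
    rw [update_of_ne hj.1]
    exact hy j hj.2
  · intro x hx
    simp only [mem_product, mem_filter, mem_univ, true_and, and_true] at hx ⊢
    intro j hj
    rcases eq_or_ne j i with rfl | hji
    · simp
    · rw [update_of_ne hji]
      exact hx j (by simp [hji, hj])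
  · rintro ⟨y, s⟩ hy
    simp only [mem_product, mem_filter, mem_univ, true_and, and_true] at hy
    simp [← hy i hi]
  · intro x _
    simp

theorem IsLocal.apply_update_of_notMem {n : ℕ} {D : Fin n → Type} [∀ i, DecidableEq (D i)]
    {C : Finset (Fin n)} {φ : (∀ j, D j) → NNReal} (hφ : IsLocal C φ) {i : Fin n}
    (hi : i ∉ C) (x : ∀ j, D j) (s : D i) : φ (update x i s) = φ x :=
  hφ _ _ fun _ hj => update_of_ne (ne_of_mem_of_not_mem hj hi) _ _

theorem notMem_insert_parents_of_lt {ι : Type*} [Preorder ι] [DecidableEq ι]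
    {pa : ι → Finset ι} (hpa : ∀ i, ∀ j ∈ pa i, j < i) {i j : ι} (hji : j < i) :
    i ∉ insert j (pa j) := fun h =>
  (mem_insert.1 h).elim (fun hij => hji.ne' hij) fun hi => (hpa j i hi).asymm hji

theorem bn_prefix_partition_function_eq_one_general
    (n : ℕ) (D : Fin n → Type) [∀ i, Fintype (D i)]
    [∀ i, DecidableEq (D i)]
    (pa : Fin n → Finset (Fin n)) (hpa : ∀ i : Fin n, ∀ j ∈ pa i, j < i)
    (f : ∀ _ : Fin n, (∀ j, D j) → NNReal)
    (hlocal : ∀ i : Fin n, IsLocal (insert i (pa i)) (f i))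
    (hnorm : ∀ (x : ∀ j, D j) (i : Fin n),
      ∑ s : D i, f i (Function.update x i s) = 1)
    (A : Finset (Fin n)) (hA : ∀ i ∈ A, pa i ⊆ A)
    (x₀ : ∀ j, D j) :
    ∑ x ∈ Finset.univ.filter (fun x : ∀ j, D j => ∀ j, j ∉ A → x j = x₀ j),
      ∏ i ∈ A, f i x = 1 := by
  induction A using Finset.induction_on_max with
  | empty => simp [← funext_iff, filter_eq']
  | insert i B hlt ih =>
    have hiB : i ∉ B := fun h => (hlt i h).false
    have hi_ignored : ∀ j ∈ B, i ∉ insert j (pa j) := fun j hj =>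
      notMem_insert_parents_of_lt hpa (hlt j hj)
    have hB : ∀ j ∈ B, pa j ⊆ B := fun j hj k hk =>
      (mem_insert.1 (hA j (mem_insert_of_mem hj) hk)).resolve_left
        fun hki => hi_ignored j hj (hki ▸ mem_insert_of_mem hk)
    rw [← ih hB]
    -- `convert`, not `rw`: on `Fin n` the filter's `∀` is decided by `Nat.decidableForallFin`.
    convert sum_agreeOutside_insert_eq_sum_sum_update hiB x₀
      (fun x => ∏ j ∈ insert i B, f j x) using 3
    rename_i y _
    calc ∏ j ∈ B, f j y
        = (∑ s : D i, f i (update y i s)) * ∏ j ∈ B, f j y := by rw [hnorm, one_mul]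
      _ = ∑ s : D i, ∏ j ∈ insert i B, f j (update y i s) := by
          rw [sum_mul]
          refine sum_congr rfl fun s _ => ?_
          rw [prod_insert hiB]
          congr 1
          exact prod_congr rfl fun j hj =>
            ((hlocal j).apply_update_of_notMem (hi_ignored j hj) y s).symm

/-- For a Bayesian network given in topological order and a parent-closed subset `A`
of variables, the product of the factors of `A`, summed over the states of the
variables of `A` (the other coordinates being fixed to a reference assignment `x₀`),
equals 1: the partition-function estimate of any prefix CTF is 1 without evidence. -/
theorem bn_prefix_partition_function_eq_one
    (n : ℕ) (D : Fin n → Type) [∀ i, Fintype (D i)] [∀ i, Nonempty (D i)]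
    [∀ i, DecidableEq (D i)]
    (pa : Fin n → Finset (Fin n)) (hpa : ∀ i : Fin n, ∀ j ∈ pa i, j < i)
    (f : ∀ _ : Fin n, (∀ j, D j) → NNReal)
    (hlocal : ∀ i : Fin n, IsLocal (insert i (pa i)) (f i))
    (hnorm : ∀ (x : ∀ j, D j) (i : Fin n),
      ∑ s : D i, f i (Function.update x i s) = 1)
    (A : Finset (Fin n)) (hA : ∀ i ∈ A, pa i ⊆ A)
    (x₀ : ∀ j, D j) :
    ∑ x ∈ Finset.univ.filter (fun x : ∀ j, D j => ∀ j, j ∉ A → x j = x₀ j),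
      ∏ i ∈ A, f i x = 1 :=
  bn_prefix_partition_function_eq_one_general n D pa hpa f hlocal hnorm A hA x₀
end

section
/- Let f : (i : Fin n) → ((∀ j, D j) → ℝ≥0) be the factors of a Bayesian network given in topological order with parent map pa. Let A ⊆ Fin n be a parent-closed Finset, let F ⊆ A be a Finset of evidence variables, let e : ∀ j, D j be an evidence assignment, and let x₀ : ∀ j, D j be a fixed reference assignment. Then the sum over all assignments y satisfying y j = e j for all j ∈ F and y j = x₀ j for all j ∉ A of ∏_{i ∈ A} f i y equals the sum over all assignments y satisfying y j = e j for all j ∈ F of ∏_{i : Fin n} f i y. That is, the normalization constant of a parent-closed prefix of the network with the evidence instantiated equals the probability of those evidence states under the full joint distribution. -/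
open Finset Function

theorem Finset.sum_filter_eq_sum_filter_sum_update {ι : Type*} [Fintype ι] [DecidableEq ι]
    {D : ι → Type*} [∀ i, Fintype (D i)] [∀ i, DecidableEq (D i)] {M : Type*} [AddCommMonoid M]
    (P : (∀ j, D j) → Prop) [DecidablePred P] (i : ι) (hP : ∀ y s, P (update y i s) ↔ P y)
    (c : D i) (g : (∀ j, D j) → M) :
    ∑ y ∈ univ.filter P, g y =
      ∑ y ∈ univ.filter (fun y => P y ∧ y i = c), ∑ s, g (update y i s) := by
  rw [← sum_product']
  refine sum_nbij' (fun y => (update y i c, y i)) (fun p => update p.1 i p.2) ?_ ?_ ?_ ?_ ?_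
  · intro y hy; simp_all
  · rintro ⟨y, s⟩ h; simp_all
  · intro y _; simp
  · rintro ⟨y, s⟩ h
    simp only [mem_product, mem_filter] at h
    simp [← h.1.2.2]
  · intro y _; simp

namespace IsLocal

variable {n : ℕ} {D : Fin n → Type} {C C' : Finset (Fin n)} {φ : (∀ j, D j) → NNReal}

theorem mono_s5 (h : IsLocal C φ) (hC : C ⊆ C') : IsLocal C' φ :=
  fun x y hxy => h x y fun j hj => hxy j (hC hj)

theorem apply_update_of_notMem_s5 (h : IsLocal C φ) {i : Fin n} (hi : i ∉ C) (x : ∀ j, D j)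
    (s : D i) : φ (update x i s) = φ x :=
  h _ _ fun _ hj => update_of_ne (ne_of_mem_of_not_mem hj hi) s x

end IsLocal

section PrefixMass

variable {n : ℕ} {D : Fin n → Type} [∀ i, Fintype (D i)] [∀ i, DecidableEq (D i)]
  (f : Fin n → (∀ j, D j) → NNReal) (F : Finset (Fin n)) (e x₀ : ∀ j, D j)

/-- The normalization constant of the prefix `B` with the evidence instantiated; clamping the
variables outside `B` to `x₀` makes the sum range over the assignments of `B` alone. -/
noncomputable def prefixMass (B : Finset (Fin n)) : NNReal :=
  ∑ y ∈ univ.filter (fun y : ∀ j, D j => (∀ j ∈ F, y j = e j) ∧ ∀ j, j ∉ B → y j = x₀ j),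
    ∏ i ∈ B, f i y

theorem prefixMass_univ :
    prefixMass f F e x₀ univ =
      ∑ y ∈ univ.filter (fun y : ∀ j, D j => ∀ j ∈ F, y j = e j), ∏ i, f i y := by
  simp [prefixMass]

variable {f F e x₀}

theorem prefixMass_insert {B : Finset (Fin n)} {i : Fin n} (hiB : i ∉ B) (hiF : i ∉ F)
    (hB : ∀ j ∈ B, IsLocal B (f j)) (hnorm : ∀ x, ∑ s : D i, f i (update x i s) = 1) :
    prefixMass f F e x₀ (insert i B) = prefixMass f F e x₀ B := by
  have hmarg (y : ∀ j, D j) :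
      ∑ s : D i, ∏ j ∈ insert i B, f j (update y i s) = ∏ j ∈ B, f j y := by
    have hrest (s : D i) : ∏ j ∈ B, f j (update y i s) = ∏ j ∈ B, f j y :=
      prod_congr rfl fun j hj => (hB j hj).apply_update_of_notMem_s5 hiB y s
    simp_rw [prod_insert hiB, hrest, ← sum_mul, hnorm, one_mul]
  rw [prefixMass, sum_filter_eq_sum_filter_sum_update _ i _ (x₀ i)]
  · simp_rw [hmarg]
    refine sum_congr (filter_congr fun y _ => ?_) fun _ _ => rfl
    simp only [mem_insert, not_or]
    grind
  · intro y s
    simp only [mem_insert, not_or]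
    grind

variable (pa : Fin n → Finset (Fin n))

theorem prefixMass_eq_prefixMass_univ (hpa : ∀ i, ∀ j ∈ pa i, j < i)
    (hlocal : ∀ i, IsLocal (insert i (pa i)) (f i))
    (hnorm : ∀ x i, ∑ s : D i, f i (update x i s) = 1)
    {A : Finset (Fin n)} (hA : ∀ i ∈ A, pa i ⊆ A) (hF : F ⊆ A) :
    prefixMass f F e x₀ A = prefixMass f F e x₀ univ := by
  suffices ∀ C B : Finset (Fin n), Bᶜ = C → (∀ i ∈ B, pa i ⊆ B) → F ⊆ B →
      prefixMass f F e x₀ B = prefixMass f F e x₀ univ from this _ A rfl hA hF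
  intro C
  induction C using Finset.induction_on_min with
  | empty => intro B hB _ _; rw [(compl_eq_empty_iff B).mp hB]
  | insert a C haC ih =>
    intro B hBc hB hFB
    have haB : a ∉ B := by simp [← mem_compl, hBc]
    have hpaB : pa a ⊆ B := fun j hj => by
      have hja := hpa a j hj
      by_contra hjB
      rw [← mem_compl, hBc, mem_insert] at hjB
      rcases hjB with rfl | hjC
      · exact lt_irrefl _ hja
      · exact lt_asymm hja (haC j hjC)
    have hcompl : (insert a B)ᶜ = C := by
      rw [compl_insert, hBc, erase_insert fun h => lt_irrefl a (haC a h)]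
    have hclosed : ∀ i ∈ insert a B, pa i ⊆ insert a B := by
      refine forall_mem_insert _ _ _ |>.mpr ⟨hpaB.trans (subset_insert _ _), fun i hi => ?_⟩
      exact (hB i hi).trans (subset_insert _ _)
    have hlocalB : ∀ j ∈ B, IsLocal B (f j) := fun j hj =>
      (hlocal j).mono_s5 (insert_subset hj (hB j hj))
    rw [← prefixMass_insert haB (fun h => haB (hFB h)) hlocalB (hnorm · a)]
    exact ih _ hcompl hclosed (hFB.trans (subset_insert _ _))

end PrefixMass

theorem bn_prefix_nc_is_evidence_prob_general
    (n : ℕ) (D : Fin n → Type) [∀ i, Fintype (D i)]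
    [∀ i, DecidableEq (D i)]
    (pa : Fin n → Finset (Fin n)) (hpa : ∀ i : Fin n, ∀ j ∈ pa i, j < i)
    (f : ∀ _ : Fin n, (∀ j, D j) → NNReal)
    (hlocal : ∀ i : Fin n, IsLocal (insert i (pa i)) (f i))
    (hnorm : ∀ (x : ∀ j, D j) (i : Fin n),
      ∑ s : D i, f i (Function.update x i s) = 1)
    (A : Finset (Fin n)) (hA : ∀ i ∈ A, pa i ⊆ A)
    (F : Finset (Fin n)) (hF : F ⊆ A)
    (e : ∀ j, D j) (x₀ : ∀ j, D j) :
    ∑ y ∈ Finset.univ.filter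
        (fun y : ∀ j, D j => (∀ j ∈ F, y j = e j) ∧ ∀ j, j ∉ A → y j = x₀ j),
      ∏ i ∈ A, f i y
      =
    ∑ y ∈ Finset.univ.filter (fun y : ∀ j, D j => ∀ j ∈ F, y j = e j),
      ∏ i : Fin n, f i y :=
  (prefixMass_eq_prefixMass_univ pa hpa hlocal hnorm hA hF).trans (prefixMass_univ f F e x₀)

/-- For a Bayesian network given in topological order, the normalization constant of
a parent-closed prefix `A` with the evidence `F` instantiated equals the probability
of those evidence states under the full joint distribution. -/
theorem bn_prefix_nc_is_evidence_prob
    (n : ℕ) (D : Fin n → Type) [∀ i, Fintype (D i)] [∀ i, Nonempty (D i)]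
    [∀ i, DecidableEq (D i)]
    (pa : Fin n → Finset (Fin n)) (hpa : ∀ i : Fin n, ∀ j ∈ pa i, j < i)
    (f : ∀ _ : Fin n, (∀ j, D j) → NNReal)
    (hlocal : ∀ i : Fin n, IsLocal (insert i (pa i)) (f i))
    (hnorm : ∀ (x : ∀ j, D j) (i : Fin n),
      ∑ s : D i, f i (Function.update x i s) = 1)
    (A : Finset (Fin n)) (hA : ∀ i ∈ A, pa i ⊆ A)
    (F : Finset (Fin n)) (hF : F ⊆ A)
    (e : ∀ j, D j) (x₀ : ∀ j, D j) :
    ∑ y ∈ Finset.univ.filter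
        (fun y : ∀ j, D j => (∀ j ∈ F, y j = e j) ∧ ∀ j, j ∉ A → y j = x₀ j),
      ∏ i ∈ A, f i y
      =
    ∑ y ∈ Finset.univ.filter (fun y : ∀ j, D j => ∀ j ∈ F, y j = e j),
      ∏ i : Fin n, f i y :=
  bn_prefix_nc_is_evidence_prob_general n D pa hpa f hlocal hnorm A hA F hF e x₀
end

section
/- Let C₁, C₂ ⊆ Fin n be Finsets of variables with sepset S = C₁ ∩ C₂, and let x₀ : ∀ j, D j be a fixed reference assignment. Let f, g, μ : (∀ j, D j) → ℝ≥0 be local to C₁, C₂ and S respectively, and suppose the pair is calibrated: for every assignment x, the sum over all assignments y satisfying y j = x j for all j ∈ S and y j = x₀ j for all j ∉ C₁ of f y equals μ x, and the sum over all assignments y satisfying y j = x j for all j ∈ S and y j = x₀ j for all j ∉ C₂ of g y equals μ x. Then, with division in ℝ≥0 (where a / 0 = 0), for every assignment x the sum over all assignments y satisfying y j = x j for all j ∈ C₁ and y j = x₀ j for all j ∉ C₁ ∪ C₂ of (f y * g y / μ y) equals f x. That is, collapsing two calibrated adjacent cliques into the clique C₁ ∪ C₂ with belief f·g/μ preserves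 the joint belief of the variables of each original clique. -/
open Finset

namespace IsLocal

variable {n : ℕ} {D : Fin n → Type} [∀ i, Fintype (D i)] [∀ i, DecidableEq (D i)]
  {φ : (∀ j, D j) → NNReal}

theorem le_sum_filter {C S : Finset (Fin n)} (hφ : IsLocal C φ) (hS : S ⊆ C)
    (x₀ x : ∀ j, D j) :
    φ x ≤ ∑ y ∈ univ.filter
      (fun y : ∀ j, D j => (∀ j ∈ S, y j = x j) ∧ ∀ j, j ∉ C → y j = x₀ j), φ y := by
  have hmem : C.piecewise x x₀ ∈ univ.filter
      (fun y : ∀ j, D j => (∀ j ∈ S, y j = x j) ∧ ∀ j, j ∉ C → y j = x₀ j) := by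
    simp only [mem_filter, mem_univ, true_and]
    exact ⟨fun j hj => piecewise_eq_of_mem _ _ _ (hS hj),
      fun j hj => piecewise_eq_of_notMem _ _ _ hj⟩
  calc φ x = φ (C.piecewise x x₀) :=
        hφ _ _ fun j hj => (piecewise_eq_of_mem _ _ _ hj).symm
    _ ≤ _ := single_le_sum (fun _ _ => zero_le) hmem

theorem sum_filter_union_eq_sum_filter_inter {C₂ : Finset (Fin n)} (hφ : IsLocal C₂ φ)
    (C₁ : Finset (Fin n)) (x₀ x : ∀ j, D j) :
    ∑ y ∈ univ.filter
        (fun y : ∀ j, D j => (∀ j ∈ C₁, y j = x j) ∧ ∀ j, j ∉ C₁ ∪ C₂ → y j = x₀ j), φ y =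
      ∑ y ∈ univ.filter
        (fun y : ∀ j, D j => (∀ j ∈ C₁ ∩ C₂, y j = x j) ∧ ∀ j, j ∉ C₂ → y j = x₀ j), φ y := by
  refine sum_nbij' (fun y => C₂.piecewise y x₀) (fun y => C₁.piecewise x y)
    ?_ ?_ ?_ ?_ fun y _ => hφ _ _ fun j hj => (piecewise_eq_of_mem _ _ _ hj).symm
  all_goals
    intro y hy
    simp only [mem_filter, mem_univ, true_and, mem_inter, mem_union, not_or] at hy ⊢
  · exact ⟨fun j hj => by simp [hj.2, hy.1 j hj.1], fun j hj => by simp [hj]⟩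
  · exact ⟨fun j hj => by simp [hj], fun j hj => by simp [hj.1, hy.2 j hj.2]⟩
  · ext j
    by_cases h₁ : j ∈ C₁
    · simp [h₁, hy.1 j h₁]
    · by_cases h₂ : j ∈ C₂ <;> simp [h₁, h₂, hy.2 j]
  · ext j
    by_cases h₂ : j ∈ C₂
    · by_cases h₁ : j ∈ C₁ <;> simp [h₁, h₂, hy.1 j]
    · simp [h₂, hy.2 j h₂]

end IsLocal

theorem collapse_preserves_clique_belief_general
    (n : ℕ) (D : Fin n → Type) [∀ i, Fintype (D i)]
    [∀ i, DecidableEq (D i)]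
    (C₁ C₂ : Finset (Fin n)) (x₀ : ∀ j, D j)
    (f g μ : (∀ j, D j) → NNReal)
    (hf : IsLocal C₁ f) (hg : IsLocal C₂ g) (hμ : IsLocal (C₁ ∩ C₂) μ)
    (hcal₁ : ∀ x : ∀ j, D j,
      ∑ y ∈ Finset.univ.filter
          (fun y : ∀ j, D j =>
            (∀ j ∈ C₁ ∩ C₂, y j = x j) ∧ ∀ j, j ∉ C₁ → y j = x₀ j),
        f y = μ x)
    (hcal₂ : ∀ x : ∀ j, D j,
      ∑ y ∈ Finset.univ.filter
          (fun y : ∀ j, D j =>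
            (∀ j ∈ C₁ ∩ C₂, y j = x j) ∧ ∀ j, j ∉ C₂ → y j = x₀ j),
        g y = μ x) :
    ∀ x : ∀ j, D j,
      ∑ y ∈ Finset.univ.filter
          (fun y : ∀ j, D j =>
            (∀ j ∈ C₁, y j = x j) ∧ ∀ j, j ∉ C₁ ∪ C₂ → y j = x₀ j),
        f y * g y / μ y = f x := by
  intro x
  have hterm : ∀ y ∈ univ.filter
      (fun y : ∀ j, D j => (∀ j ∈ C₁, y j = x j) ∧ ∀ j, j ∉ C₁ ∪ C₂ → y j = x₀ j),
      f y * g y / μ y = f x / μ x * g y := by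
    intro y hy
    obtain ⟨hyx, -⟩ := (mem_filter.mp hy).2
    rw [hf y x hyx, hμ y x fun j hj => hyx j (mem_inter.mp hj).1, mul_div_right_comm]
  have hfμ : f x ≤ μ x := hcal₁ x ▸ hf.le_sum_filter inter_subset_left x₀ x
  calc _ = f x / μ x * μ x := by
        rw [sum_congr rfl hterm, ← mul_sum, hg.sum_filter_union_eq_sum_filter_inter, hcal₂]
    _ = f x := div_mul_cancel_of_imp fun h => le_zero_iff.mp (h ▸ hfμ)

/-- Collapsing two calibrated adjacent cliques `C₁, C₂` with sepset `S = C₁ ∩ C₂`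
into the clique `C₁ ∪ C₂` with belief `f·g/μ` preserves the joint belief of the
variables of each original clique. -/
theorem collapse_preserves_clique_belief
    (n : ℕ) (D : Fin n → Type) [∀ i, Fintype (D i)] [∀ i, Nonempty (D i)]
    [∀ i, DecidableEq (D i)]
    (C₁ C₂ : Finset (Fin n)) (x₀ : ∀ j, D j)
    (f g μ : (∀ j, D j) → NNReal)
    (hf : IsLocal C₁ f) (hg : IsLocal C₂ g) (hμ : IsLocal (C₁ ∩ C₂) μ)
    (hcal₁ : ∀ x : ∀ j, D j,
      ∑ y ∈ Finset.univ.filter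
          (fun y : ∀ j, D j =>
            (∀ j ∈ C₁ ∩ C₂, y j = x j) ∧ ∀ j, j ∉ C₁ → y j = x₀ j),
        f y = μ x)
    (hcal₂ : ∀ x : ∀ j, D j,
      ∑ y ∈ Finset.univ.filter
          (fun y : ∀ j, D j =>
            (∀ j ∈ C₁ ∩ C₂, y j = x j) ∧ ∀ j, j ∉ C₂ → y j = x₀ j),
        g y = μ x) :
    ∀ x : ∀ j, D j,
      ∑ y ∈ Finset.univ.filter
          (fun y : ∀ j, D j =>
            (∀ j ∈ C₁, y j = x j) ∧ ∀ j, j ∉ C₁ ∪ C₂ → y j = x₀ j),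
        f y * g y / μ y = f x :=
  collapse_preserves_clique_belief_general n D C₁ C₂ x₀ f g μ hf hg hμ hcal₁ hcal₂
end

section
/- Let V be a finite type, G : SimpleGraph V a connected graph, Cl : V → Finset (Fin n) an assignment of cliques of variables to graph vertices, and x₀ : ∀ j, D j a fixed reference assignment. Let β : V → ((∀ j, D j) → ℝ≥0) be beliefs with each β v local to Cl v, and suppose the beliefs are calibrated along every edge: whenever G.Adj u v, for every assignment x, the sum over all assignments y satisfying y j = x j for all j ∈ Cl u ∩ Cl v and y j = x₀ j for all j ∉ Cl u of β u y equals the sum over all assignments y satisfying y j = x j for all j ∈ Cl u ∩ Cl v and y j = x₀ j for all j ∉ Cl v of β v y. Then all cliques have the same normalization constant: for all u, v : V, the sum over all assignments y satisfying y j = x₀ j for all j ∉ Cl u of β u y equals the sum over all assignments y satisfying y j = x₀ j for all j ∉ Cl v of β v y. -/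
theorem SimpleGraph.Reachable.eq_of_forall_adj {V α : Type*} {G : SimpleGraph V} {f : V → α}
    (hf : ∀ u v, G.Adj u v → f u = f v) {u v : V} (huv : G.Reachable u v) : f u = f v := by
  obtain ⟨p⟩ := huv
  induction p with
  | nil => rfl
  | cons h _ ih => exact (hf _ _ h).trans ih

section Marginalization

variable {ι : Type*} [Fintype ι] [DecidableEq ι] {D : ι → Type*} [∀ i, Fintype (D i)]
  [∀ i, DecidableEq (D i)] {M : Type*} [AddCommMonoid M]

theorem sum_fixedOutside_eq_sum_sum_agreeOn (S W : Finset ι) (x₀ : ∀ j, D j) (f : (∀ j, D j) → M) :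
    ∑ y ∈ Finset.univ.filter (fun y : ∀ j, D j => ∀ j, j ∉ W → y j = x₀ j), f y =
      ∑ x ∈ Finset.univ.filter (fun x : ∀ j, D j => ∀ j, j ∉ S → x j = x₀ j),
        ∑ y ∈ Finset.univ.filter (fun y : ∀ j, D j =>
            (∀ j ∈ S, y j = x j) ∧ ∀ j, j ∉ W → y j = x₀ j), f y := by
  have hmaps : ∀ y ∈ Finset.univ.filter (fun y : ∀ j, D j => ∀ j, j ∉ W → y j = x₀ j),
      S.piecewise y x₀ ∈ Finset.univ.filter (fun x : ∀ j, D j => ∀ j, j ∉ S → x j = x₀ j) :=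
    fun y _ => by simpa using fun j hj => S.piecewise_eq_of_notMem y x₀ hj
  rw [← Finset.sum_fiberwise_of_maps_to hmaps]
  refine Finset.sum_congr rfl fun x hx => Finset.sum_congr ?_ fun _ _ => rfl
  simp only [Finset.mem_filter, Finset.mem_univ, true_and] at hx
  ext y
  simp only [Finset.mem_filter, Finset.mem_univ, true_and, funext_iff]
  constructor
  · rintro ⟨hW, hS⟩
    exact ⟨fun j hj => by simpa [hj] using hS j, hW⟩
  · rintro ⟨hS, hW⟩
    refine ⟨hW, fun j => ?_⟩
    by_cases hj : j ∈ S
    · simp [hj, hS j hj]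
    · simp [hj, hx j hj]

end Marginalization

theorem calibrated_cliques_same_normalization_constant_general
    (n : ℕ) (D : Fin n → Type) [∀ i, Fintype (D i)]
    [∀ i, DecidableEq (D i)]
    (V : Type) (G : SimpleGraph V) (hG : G.Connected)
    (Cl : V → Finset (Fin n)) (x₀ : ∀ j, D j)
    (β : V → (∀ j, D j) → NNReal)
    (hcal : ∀ u v : V, G.Adj u v → ∀ x : ∀ j, D j,
      (∑ y ∈ Finset.univ.filter
          (fun y : ∀ j, D j =>
            (∀ j ∈ Cl u ∩ Cl v, y j = x j) ∧ ∀ j, j ∉ Cl u → y j = x₀ j),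
        β u y)
        =
      ∑ y ∈ Finset.univ.filter
          (fun y : ∀ j, D j =>
            (∀ j ∈ Cl u ∩ Cl v, y j = x j) ∧ ∀ j, j ∉ Cl v → y j = x₀ j),
        β v y) :
    ∀ u v : V,
      (∑ y ∈ Finset.univ.filter
          (fun y : ∀ j, D j => ∀ j, j ∉ Cl u → y j = x₀ j),
        β u y)
        =
      ∑ y ∈ Finset.univ.filter
          (fun y : ∀ j, D j => ∀ j, j ∉ Cl v → y j = x₀ j),
        β v y := by
  have adj_eq : ∀ a b, G.Adj a b →
      ∑ y ∈ Finset.univ.filter (fun y : ∀ j, D j => ∀ j, j ∉ Cl a → y j = x₀ j), β a y =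
        ∑ y ∈ Finset.univ.filter (fun y : ∀ j, D j => ∀ j, j ∉ Cl b → y j = x₀ j), β b y := by
    intro a b hab
    have split (w : V) :
        ∑ y ∈ Finset.univ.filter (fun y : ∀ j, D j => ∀ j, j ∉ Cl w → y j = x₀ j), β w y =
          ∑ x ∈ Finset.univ.filter (fun x : ∀ j, D j => ∀ j, j ∉ Cl a ∩ Cl b → x j = x₀ j),
            ∑ y ∈ Finset.univ.filter (fun y : ∀ j, D j =>
              (∀ j ∈ Cl a ∩ Cl b, y j = x j) ∧ ∀ j, j ∉ Cl w → y j = x₀ j), β w y := by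
      -- `convert` only reconciles the instances deciding `∀ j : Fin n, _`
      -- (`Nat.decidableForallFin` here, `Fintype.decidableForallFintype` in the lemma).
      convert sum_fixedOutside_eq_sum_sum_agreeOn (Cl a ∩ Cl b) (Cl w) x₀ (β w)
    rw [split a, split b]
    exact Finset.sum_congr rfl fun x _ => hcal a b hab x
  exact fun u v => (hG.preconnected u v).eq_of_forall_adj adj_eq

/-- In a connected graph of cliques whose beliefs are calibrated along every edge
(adjacent cliques agree on the marginals of their sepset variables), all clique
beliefs have the same normalization constant. -/
theorem calibrated_cliques_same_normalization_constant
    (n : ℕ) (D : Fin n → Type) [∀ i, Fintype (D i)] [∀ i, Nonempty (D i)]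
    [∀ i, DecidableEq (D i)]
    (V : Type) [Fintype V] (G : SimpleGraph V) (hG : G.Connected)
    (Cl : V → Finset (Fin n)) (x₀ : ∀ j, D j)
    (β : V → (∀ j, D j) → NNReal)
    (hβ : ∀ v : V, IsLocal (Cl v) (β v))
    (hcal : ∀ u v : V, G.Adj u v → ∀ x : ∀ j, D j,
      (∑ y ∈ Finset.univ.filter
          (fun y : ∀ j, D j =>
            (∀ j ∈ Cl u ∩ Cl v, y j = x j) ∧ ∀ j, j ∉ Cl u → y j = x₀ j),
        β u y)
        =
      ∑ y ∈ Finset.univ.filter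
          (fun y : ∀ j, D j =>
            (∀ j ∈ Cl u ∩ Cl v, y j = x j) ∧ ∀ j, j ∉ Cl v → y j = x₀ j),
        β v y) :
    ∀ u v : V,
      (∑ y ∈ Finset.univ.filter
          (fun y : ∀ j, D j => ∀ j, j ∉ Cl u → y j = x₀ j),
        β u y)
        =
      ∑ y ∈ Finset.univ.filter
          (fun y : ∀ j, D j => ∀ j, j ∉ Cl v → y j = x₀ j),
        β v y :=
  calibrated_cliques_same_normalization_constant_general n D V G hG Cl x₀ β hcal
end

section
/- Let V be a nonempty finite type and G : SimpleGraph V a tree (G.IsTree). Let Cl : V → Finset (Fin n) assign a clique of variables to each vertex such that every variable i : Fin n belongs to Cl v for some v, and assume the running intersection property: for every i : Fin n, the subgraph of G induced on {v : V | i ∈ Cl v} is connected. Fix a reference assignment x₀ : ∀ j, D j. Let β : V → ((∀ j, D j) → ℝ≥0) satisfy: each β v is local to Cl v and β v x > 0 for every assignment x. Let μ : V → V → ((∀ j, D j) → ℝ≥0) satisfy μ u v = μ v u, with each μ u v local to Cl u ∩ Cl v, and the calibration condition: whenever G.Adj u v, for every assignment x, μ u v x equals the sum over all assignments y satisfying y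 j = x j for all j ∈ Cl u ∩ Cl v and y j = x₀ j for all j ∉ Cl u of β u y, and also equals the corresponding sum with u and v interchanged. Define the joint function J x = (∏_{v : V} β v x) / (∏ over the edges {u,v} of G of μ u v x). Then for every vertex v and every assignment x, the sum over all assignments y satisfying y j = x j for all j ∈ Cl v of J y equals β v x. -/
/-!
Root the tree at `v` and eliminate the cliques leaf by leaf. If `u ≠ v` is a leaf of the current
subtree with neighbour `p`, then by the running intersection property the variables of `Cl u`
that occur in no other clique of the subtree are exactly those of `Cl u \ Cl p`. Only the factor
`β u` depends on them, and summing it over them gives the sepset belief `μ u p` by calibration,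
which cancels the denominator of the edge `u p`. What remains is the joint distribution of the
smaller subtree; at the root only `β v` is left.
-/

open Finset

namespace SimpleGraph

variable {V : Type*} {G : SimpleGraph V}

lemma Preconnected.exists_isPath_support_subset {s : Set V} (hs : (G.induce s).Preconnected)
    {a b : V} (ha : a ∈ s) (hb : b ∈ s) :
    ∃ p : G.Walk a b, p.IsPath ∧ ∀ v ∈ p.support, v ∈ s := by
  classical
  obtain ⟨w⟩ := hs ⟨a, ha⟩ ⟨b, hb⟩
  let q := w.map (Embedding.induce s).toHom
  refine ⟨q.bypass, q.bypass_isPath, fun v hv => ?_⟩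
  have hv' : v ∈ q.support := q.support_bypass_subset_support hv
  simp only [q, Walk.support_map, List.mem_map] at hv'
  obtain ⟨⟨v', hv's⟩, -, rfl⟩ := hv'
  exact hv's

lemma IsAcyclic.preconnected_induce_inter (hG : G.IsAcyclic) {s t : Set V}
    (hs : (G.induce s).Preconnected) (ht : (G.induce t).Preconnected) :
    (G.induce (s ∩ t)).Preconnected := by
  rintro ⟨a, has, hat⟩ ⟨b, hbs, hbt⟩
  obtain ⟨p, hp, hps⟩ := hs.exists_isPath_support_subset has hbs
  obtain ⟨q, hq, hqt⟩ := ht.exists_isPath_support_subset hat hbt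
  obtain rfl : p = q := congrArg Subtype.val ((hG.subsingleton_path a b).elim ⟨p, hp⟩ ⟨q, hq⟩)
  exact ⟨p.induce (s ∩ t) fun v hv => ⟨hps v hv, hqt v hv⟩⟩

lemma Preconnected.exists_adj_of_induce {s : Set V} (hs : (G.induce s).Preconnected) {u w : V}
    (hu : u ∈ s) (hw : w ∈ s) (huw : u ≠ w) : ∃ q ∈ s, G.Adj u q := by
  obtain ⟨p⟩ := hs ⟨u, hu⟩ ⟨w, hw⟩
  have hnil : ¬ p.Nil := Walk.not_nil_of_ne fun h => huw (congrArg Subtype.val h)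
  exact ⟨_, (p.getVert 1).2, p.adj_snd hnil⟩

lemma IsAcyclic.exists_leaf_ne_of_connected_induce [DecidableEq V] (hG : G.IsAcyclic)
    {S : Finset V} (hS : (G.induce (S : Set V)).Connected) {r : V} (hS2 : 1 < S.card) :
    ∃ u ∈ S, u ≠ r ∧ ∃ p ∈ S, G.Adj u p ∧ (∀ q ∈ S, G.Adj u q → q = p) ∧
      (G.induce (S.erase u : Set V)).Connected := by
  classical
  have hT : (G.induce (S : Set V)).IsTree := ⟨hS, hG.induce _⟩
  have : Nontrivial (S : Set V) := (Finset.one_lt_card_iff_nontrivial.mp hS2).coe_sort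
  obtain ⟨a, b, hab, ha, hb⟩ := hT.exists_ne_and_degree_eq_one
  obtain ⟨u, hur, hu⟩ : ∃ u : (S : Set V), u.1 ≠ r ∧ (G.induce (S : Set V)).degree u = 1 := by
    by_cases har : a.1 = r
    · exact ⟨b, fun hbr => hab (Subtype.ext (har.trans hbr.symm)), hb⟩
    · exact ⟨a, har, ha⟩
  obtain ⟨p, hup, hp⟩ := degree_eq_one_iff_existsUnique_adj.mp hu
  refine ⟨u, u.2, hur, p, p.2, hup, fun q hq huq => congrArg Subtype.val (hp ⟨q, hq⟩ huq), ?_⟩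
  let f : (G.induce (S : Set V)).induce {u}ᶜ →g G.induce (S.erase u : Set V) :=
    { toFun := fun w => ⟨w.1.1, mem_erase.mpr ⟨fun h => w.2 (Subtype.ext h), w.1.2⟩⟩
      map_rel' := id }
  refine (hS.induce_compl_singleton_of_degree_eq_one hu).map f fun w => ?_
  have hw : w.1 ∈ S.erase u := w.2
  exact ⟨⟨⟨w.1, mem_of_mem_erase hw⟩, fun h => ne_of_mem_erase hw (congrArg Subtype.val h)⟩, rfl⟩

lemma IsAcyclic.disjoint_sdiff_biUnion_erase_of_leaf {ι : Type*} [DecidableEq ι] [DecidableEq V]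
    (hG : G.IsAcyclic) {Cl : V → Finset ι} (hrip : ∀ i, (G.induce {v | i ∈ Cl v}).Preconnected)
    {S : Finset V} (hS : (G.induce (S : Set V)).Preconnected) {u p : V} (hu : u ∈ S)
    (huniq : ∀ q ∈ S, G.Adj u q → q = p) :
    Disjoint (Cl u \ Cl p) ((S.erase u).biUnion Cl) := by
  refine Finset.disjoint_left.mpr fun j hj hjS' => ?_
  obtain ⟨w, hw, hjw⟩ := mem_biUnion.mp hjS'
  obtain ⟨q, ⟨hjq, hqS⟩, huq⟩ :=
    (hG.preconnected_induce_inter (hrip j) hS).exists_adj_of_induce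
      (⟨(mem_sdiff.mp hj).1, hu⟩ : u ∈ {v | j ∈ Cl v} ∩ (S : Set V))
      (⟨hjw, mem_of_mem_erase hw⟩ : w ∈ {v | j ∈ Cl v} ∩ (S : Set V)) (ne_of_mem_erase hw).symm
  exact (mem_sdiff.mp hj).2 (huniq q hqS huq ▸ hjq)

lemma edgeFinset_inter_sym2_eq_insert_of_leaf [DecidableEq V] [Fintype G.edgeSet] {S : Finset V}
    {u p : V} (hu : u ∈ S) (hp : p ∈ S) (hup : G.Adj u p) (huniq : ∀ q ∈ S, G.Adj u q → q = p) :
    G.edgeFinset ∩ S.sym2 = insert s(u, p) (G.edgeFinset ∩ (S.erase u).sym2) := by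
  ext e
  induction e with
  | _ a b =>
  simp only [mem_inter, mem_insert, mem_edgeFinset, mem_edgeSet, mk_mem_sym2_iff, mem_erase,
    Sym2.eq_iff]
  grind [SimpleGraph.adj_comm]

end SimpleGraph

section Factors

variable {n : ℕ} {D : Fin n → Type} {C C' : Finset (Fin n)} {φ ψ : (∀ j, D j) → NNReal}

theorem IsLocal.mono_s9 (hφ : IsLocal C φ) (hCC' : C ⊆ C') : IsLocal C' φ :=
  fun x y hxy => hφ x y fun j hj => hxy j (hCC' hj)

theorem IsLocal.div (hφ : IsLocal C φ) (hψ : IsLocal C ψ) : IsLocal C (fun x => φ x / ψ x) :=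
  fun x y hxy => congrArg₂ (· / ·) (hφ x y hxy) (hψ x y hxy)

theorem IsLocal.prod {ι : Type*} {s : Finset ι} {φ : ι → (∀ j, D j) → NNReal}
    (hφ : ∀ i ∈ s, IsLocal C (φ i)) : IsLocal C (fun x => ∏ i ∈ s, φ i x) :=
  fun x y hxy => prod_congr rfl fun i hi => hφ i hi x y hxy

variable [∀ i, Fintype (D i)] [∀ i, DecidableEq (D i)]

def sumOut (B : Finset (Fin n)) (f : (∀ j, D j) → NNReal) (x : ∀ j, D j) : NNReal :=
  ∑ y ∈ univ.filter (fun y => ∀ j ∉ B, y j = x j), f y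

theorem sumOut_empty (f : (∀ j, D j) → NNReal) (x : ∀ j, D j) : sumOut ∅ f x = f x := by
  simp [sumOut, ← funext_iff, filter_eq']

theorem sumOut_compl (C : Finset (Fin n)) (f : (∀ j, D j) → NNReal) (x : ∀ j, D j) :
    sumOut Cᶜ f x = ∑ y ∈ univ.filter (fun y => ∀ j ∈ C, y j = x j), f y := by
  simp only [sumOut, mem_compl, not_not]

theorem le_sumOut (B : Finset (Fin n)) (f : (∀ j, D j) → NNReal) (x : ∀ j, D j) :
    f x ≤ sumOut B f x :=
  single_le_sum (fun _ _ => zero_le) (mem_filter.mpr ⟨mem_univ _, fun _ _ => rfl⟩)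

theorem sumOut_union {A B : Finset (Fin n)} (hAB : Disjoint B A) (f : (∀ j, D j) → NNReal)
    (x : ∀ j, D j) : sumOut (B ∪ A) f x = sumOut B (sumOut A f) x := by
  -- group the assignments `y` by their coordinates outside `A`, i.e. by `A.piecewise x y`
  have hmaps : ∀ y ∈ univ.filter (fun y : ∀ j, D j => ∀ j ∉ B ∪ A, y j = x j),
      A.piecewise x y ∈ univ.filter (fun z : ∀ j, D j => ∀ j ∉ B, z j = x j) := by
    grind [piecewise]
  rw [sumOut, ← sum_fiberwise_of_maps_to hmaps]
  refine sum_congr rfl fun z hz => sum_congr (ext fun y => ?_) fun _ _ => rfl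
  simp only [mem_filter, mem_univ, true_and, funext_iff, piecewise] at hz ⊢
  grind [disjoint_right]

theorem sumOut_mul_of_isLocal {B : Finset (Fin n)} (hψ : IsLocal C ψ) (hBC : Disjoint B C)
    (x : ∀ j, D j) : sumOut B (fun y => φ y * ψ y) x = sumOut B φ x * ψ x := by
  rw [sumOut, sumOut, sum_mul]
  refine sum_congr rfl fun y hy => ?_
  rw [hψ y x fun j hj => (mem_filter.mp hy).2 j (disjoint_right.mp hBC hj)]

theorem IsLocal.sum_filter_eq_sumOut (hφ : IsLocal C φ) (K : Finset (Fin n))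
    (x x₀ : ∀ j, D j) :
    ∑ y ∈ univ.filter (fun y : ∀ j, D j =>
        (∀ j ∈ C ∩ K, y j = x j) ∧ ∀ j, j ∉ C → y j = x₀ j), φ y =
      sumOut (C \ K) φ x := by
  -- both sides range over the assignments on `C \ K`, completed by `x₀` resp. `x` elsewhere
  refine sum_nbij' (fun y => C.piecewise y x) (fun y => C.piecewise y x₀) ?_ ?_ ?_ ?_
    fun y _ => hφ _ _ fun j hj => by simp [hj]
  all_goals grind [piecewise]

end Factors

section CliqueTree

variable {n : ℕ} {D : Fin n → Type} {V : Type} [DecidableEq V]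

noncomputable def subtreeJoint (G : SimpleGraph V) [Fintype G.edgeSet]
    (β : V → (∀ j, D j) → NNReal) {μ : V → V → (∀ j, D j) → NNReal}
    (hμsymm : ∀ u v, μ u v = μ v u) (S : Finset V) (y : ∀ j, D j) : NNReal :=
  (∏ w ∈ S, β w y) / ∏ e ∈ G.edgeFinset ∩ S.sym2,
    Sym2.lift ⟨fun a b => μ a b y, fun a b => congrFun (hμsymm a b) y⟩ e

variable {G : SimpleGraph V} [Fintype G.edgeSet] {Cl : V → Finset (Fin n)}
  {β : V → (∀ j, D j) → NNReal} {μ : V → V → (∀ j, D j) → NNReal}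
  (hμsymm : ∀ u v, μ u v = μ v u)

theorem subtreeJoint_singleton (r : V) (y : ∀ j, D j) :
    subtreeJoint G β hμsymm {r} y = β r y := by
  simp [subtreeJoint]

theorem subtreeJoint_eq_of_leaf {S : Finset V} {u p : V} (hu : u ∈ S) (hp : p ∈ S)
    (hup : G.Adj u p) (huniq : ∀ q ∈ S, G.Adj u q → q = p) :
    subtreeJoint G β hμsymm S =
      fun y => β u y * (subtreeJoint G β hμsymm (S.erase u) y / μ u p y) := by
  funext y
  have hnotin : s(u, p) ∉ G.edgeFinset ∩ (S.erase u).sym2 := by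
    simp
  rw [subtreeJoint, subtreeJoint, G.edgeFinset_inter_sym2_eq_insert_of_leaf hu hp hup huniq,
    prod_insert hnotin, ← mul_prod_erase S _ hu, Sym2.lift_mk, div_div, mul_comm (μ u p y),
    mul_div_assoc]

theorem isLocal_subtreeJoint (hβ : ∀ v, IsLocal (Cl v) (β v))
    (hμ : ∀ u v, G.Adj u v → IsLocal (Cl u ∩ Cl v) (μ u v)) (S : Finset V) :
    IsLocal (S.biUnion Cl) (subtreeJoint G β hμsymm S) := by
  refine IsLocal.div (IsLocal.prod fun w hw => (hβ w).mono_s9 (subset_biUnion_of_mem Cl hw))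
    (IsLocal.prod fun e he => ?_)
  induction e with
  | _ a b =>
  obtain ⟨hab, haS, -⟩ : G.Adj a b ∧ a ∈ S ∧ b ∈ S := by simpa using he
  exact (hμ a b hab).mono_s9 (inter_subset_left.trans (subset_biUnion_of_mem Cl haS))

variable [∀ i, Fintype (D i)] [∀ i, DecidableEq (D i)]

theorem sumOut_subtreeJoint (hG : G.IsAcyclic)
    (hrip : ∀ i, (G.induce {v | i ∈ Cl v}).Preconnected)
    (hβ : ∀ v, IsLocal (Cl v) (β v)) (hβpos : ∀ v x, 0 < β v x)
    (hμ : ∀ u v, G.Adj u v → IsLocal (Cl u ∩ Cl v) (μ u v))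
    (hcal : ∀ u v, G.Adj u v → ∀ x, μ u v x = sumOut (Cl u \ Cl v) (β u) x)
    {S : Finset V} (hS : (G.induce (S : Set V)).Connected) {r : V} (hr : r ∈ S)
    (x : ∀ j, D j) :
    sumOut (S.biUnion Cl \ Cl r) (subtreeJoint G β hμsymm S) x = β r x := by
  induction S using Finset.strongInduction generalizing x with
  | H S ih =>
  rcases le_or_gt S.card 1 with hS1 | hS1
  · obtain rfl : S = {r} :=
      eq_singleton_iff_unique_mem.mpr ⟨hr, fun a ha => card_le_one.mp hS1 a ha r hr⟩
    simp only [singleton_biUnion, sdiff_self, bot_eq_empty, sumOut_empty, subtreeJoint_singleton]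
  obtain ⟨u, hu, hur, p, hp, hup, huniq, hS'⟩ := hG.exists_leaf_ne_of_connected_induce hS hS1
  have hpS' : p ∈ S.erase u := mem_erase.mpr ⟨hup.ne.symm, hp⟩
  have hrS' : r ∈ S.erase u := mem_erase.mpr ⟨hur.symm, hr⟩
  have hleaf := hG.disjoint_sdiff_biUnion_erase_of_leaf hrip hS.preconnected hu huniq
  have hvars : S.biUnion Cl \ Cl r = ((S.erase u).biUnion Cl \ Cl r) ∪ (Cl u \ Cl p) := by
    have hClp := subset_biUnion_of_mem Cl hpS'
    have hClr := subset_biUnion_of_mem Cl hrS'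
    rw [← insert_erase hu, biUnion_insert, erase_insert (notMem_erase u S)]
    ext j
    have : j ∈ Cl u \ Cl p → j ∉ (S.erase u).biUnion Cl := fun h => disjoint_left.mp hleaf h
    simp only [mem_union, mem_sdiff]
    grind
  have hinner : sumOut (Cl u \ Cl p) (subtreeJoint G β hμsymm S) =
      subtreeJoint G β hμsymm (S.erase u) := by
    funext y
    have hloc : IsLocal ((S.erase u).biUnion Cl)
        (fun z => subtreeJoint G β hμsymm (S.erase u) z / μ u p z) :=
      (isLocal_subtreeJoint hμsymm hβ hμ _).div
        ((hμ u p hup).mono_s9 (inter_subset_right.trans (subset_biUnion_of_mem Cl hpS')))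
    have hμpos : 0 < μ u p y := (hcal u p hup y).symm ▸ (hβpos u y).trans_le (le_sumOut _ _ _)
    rw [subtreeJoint_eq_of_leaf hμsymm hu hp hup huniq, sumOut_mul_of_isLocal hloc hleaf,
      ← hcal u p hup, mul_div_cancel₀ _ hμpos.ne']
  rw [hvars, sumOut_union (hleaf.symm.mono_left sdiff_subset), hinner]
  exact ih _ (erase_ssubset hu) hS' hrS' x

end CliqueTree

/-- In a calibrated clique tree satisfying the running intersection property, the
joint distribution (product of clique beliefs divided by the product of sepset
beliefs) marginalizes onto any clique to give exactly that clique's belief. -/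
theorem calibrated_clique_tree_marginal_eq_belief
    (n : ℕ) (D : Fin n → Type) [∀ i, Fintype (D i)]
    [∀ i, DecidableEq (D i)]
    (V : Type) [Fintype V] [DecidableEq V]
    (G : SimpleGraph V) [DecidableRel G.Adj] (hG : G.IsTree)
    (Cl : V → Finset (Fin n))
    (hcover : ∀ i : Fin n, ∃ v : V, i ∈ Cl v)
    (hrip : ∀ i : Fin n, (G.induce {v : V | i ∈ Cl v}).Connected)
    (x₀ : ∀ j, D j)
    (β : V → (∀ j, D j) → NNReal)
    (hβ : ∀ v : V, IsLocal (Cl v) (β v))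
    (hβpos : ∀ (v : V) (x : ∀ j, D j), 0 < β v x)
    (μ : V → V → (∀ j, D j) → NNReal)
    (hμsymm : ∀ u v : V, μ u v = μ v u)
    (hμ : ∀ u v : V, IsLocal (Cl u ∩ Cl v) (μ u v))
    (hcal : ∀ u v : V, G.Adj u v → ∀ x : ∀ j, D j,
      (μ u v x =
        ∑ y ∈ Finset.univ.filter
            (fun y : ∀ j, D j =>
              (∀ j ∈ Cl u ∩ Cl v, y j = x j) ∧ ∀ j, j ∉ Cl u → y j = x₀ j),
          β u y)
        ∧
      μ u v x =
        ∑ y ∈ Finset.univ.filter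
            (fun y : ∀ j, D j =>
              (∀ j ∈ Cl v ∩ Cl u, y j = x j) ∧ ∀ j, j ∉ Cl v → y j = x₀ j),
          β v y) :
    ∀ (v : V) (x : ∀ j, D j),
      ∑ y ∈ Finset.univ.filter (fun y : ∀ j, D j => ∀ j ∈ Cl v, y j = x j),
        ((∏ u : V, β u y) /
          ∏ e ∈ G.edgeFinset,
            Sym2.lift ⟨fun a b => μ a b y, fun a b => by exact congrFun (hμsymm a b) y⟩ e)
        = β v x := by
  intro v x
  have hcal' : ∀ u w, G.Adj u w → ∀ x, μ u w x = sumOut (Cl u \ Cl w) (β u) x :=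
    fun u w huw x => (hcal u w huw x).1.trans ((hβ u).sum_filter_eq_sumOut (Cl w) x x₀)
  have hvars : (univ : Finset V).biUnion Cl \ Cl v = (Cl v)ᶜ := by
    rw [compl_eq_univ_sdiff, eq_univ_of_forall fun i =>
      mem_biUnion.mpr ((hcover i).imp fun w h => ⟨mem_univ w, h⟩)]
  have hconn : (G.induce ((univ : Finset V) : Set V)).Connected := by
    rw [coe_univ]
    exact (SimpleGraph.induceUnivIso G).connected_iff.mpr hG.connected
  have hedges : G.edgeFinset ∩ (univ : Finset V).sym2 = G.edgeFinset :=
    inter_eq_left.mpr fun e _ => mem_sym2_iff.mpr fun a _ => mem_univ a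
  have := sumOut_subtreeJoint hμsymm hG.isAcyclic (fun i => (hrip i).preconnected) hβ hβpos
    (fun u w _ => hμ u w) hcal' hconn (mem_univ v) x
  simpa only [hvars, sumOut_compl, subtreeJoint, hedges] using this
end

section
/- Let V be a nonempty finite type and G : SimpleGraph V a tree (G.IsTree). Let Cl : V → Finset (Fin n) assign a clique of variables to each vertex and assume the running intersection property: for every i : Fin n, the subgraph of G induced on {v : V | i ∈ Cl v} is connected. Fix a reference assignment x₀ : ∀ j, D j. Let β : V → ((∀ j, D j) → ℝ≥0) be beliefs with each β v local to Cl v, calibrated along every edge: whenever G.Adj u v, for every assignment x, the sum over all assignments y satisfying y j = x j for all j ∈ Cl u ∩ Cl v and y j = x₀ j for all j ∉ Cl u of β u y equals the sum over all assignments y satisfying y j = x j for all j ∈ Cl u ∩ Cl v and y j = x₀ j for all j ∉ Cl v of β v y. Then any two cliques agree on the marginals of their shared variables: for all u, w : V, every Finset T ⊆ Cl u ∩ Cl w, and every assignment x, the sum over all assignments y satisfying y j = x j for all j ∈ T and y j = x₀ j for all j ∉ Cl u of β u y equals the sum over all assignments y satisfying y j = x j for all j ∈ T and y j = x₀ j for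 all j ∉ Cl w of β w y. -/
/-!
The cliques containing a variable form a subtree, so the cliques containing every variable of
`T` form one too, being an intersection of subtrees of a tree. Along each of its edges `a – b`
we have `T ⊆ Cl a ∩ Cl b`, and summing the calibration identity over the sepset assignments
that extend a given assignment of `T` shows that `a` and `b` have the same marginal on `T`.
Hence that marginal is constant on the subtree, which contains both `u` and `w`.
-/

open Finset

namespace SimpleGraph

variable {V : Type*} {G : SimpleGraph V}

theorem Reachable.eq_of_forall_adj_s10 {β : Sort*} {f : V → β}
    (hf : ∀ u v, G.Adj u v → f u = f v) {u v : V} (h : G.Reachable u v) : f u = f v := by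
  rw [reachable_iff_reflTransGen] at h
  induction h with
  | refl => rfl
  | tail _ hadj ih => exact ih.trans (hf _ _ hadj)

theorem IsAcyclic.mem_of_mem_support_of_preconnected_induce (hG : G.IsAcyclic) {s : Set V}
    (hs : (G.induce s).Preconnected) {u w : V} (hu : u ∈ s) (hw : w ∈ s) {p : G.Walk u w}
    (hp : p.IsPath) {v : V} (hv : v ∈ p.support) : v ∈ s := by
  obtain ⟨q, hq⟩ := (hs ⟨u, hu⟩ ⟨w, hw⟩).exists_isPath
  have hpq : p = q.map (Embedding.induce s).toHom := congrArg Subtype.val <|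
    (hG.subsingleton_path u w).elim ⟨p, hp⟩ ⟨_, hq.map Subtype.coe_injective⟩
  subst hpq
  obtain ⟨⟨v, hvs⟩, -, rfl⟩ := List.mem_map.mp (Walk.support_map _ q ▸ hv)
  exact hvs

theorem IsTree.preconnected_induce_iInter {ι : Sort*} {s : ι → Set V} (hG : G.IsTree)
    (hs : ∀ i, (G.induce (s i)).Preconnected) : (G.induce (⋂ i, s i)).Preconnected := by
  rintro ⟨u, hu⟩ ⟨w, hw⟩
  obtain ⟨p, hp⟩ := (hG.connected u w).exists_isPath
  have hsupp : ∀ v ∈ p.support, v ∈ ⋂ i, s i := fun v hv =>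
    Set.mem_iInter.mpr fun i => hG.isAcyclic.mem_of_mem_support_of_preconnected_induce (hs i)
      (Set.mem_iInter.mp hu i) (Set.mem_iInter.mp hw i) hp hv
  exact ⟨p.induce _ hsupp⟩

end SimpleGraph

section Marginal

variable {ι : Type*} [Fintype ι] [DecidableEq ι] {D : ι → Type*} [∀ i, Fintype (D i)]
  [∀ i, DecidableEq (D i)] {M : Type*} [AddCommMonoid M]

def clampedAssignments (x₀ : ∀ i, D i) (C T : Finset ι) (x : ∀ i, D i) : Finset (∀ i, D i) :=
  univ.filter fun y => (∀ j ∈ T, y j = x j) ∧ ∀ j, j ∉ C → y j = x₀ j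

/-- Clamping the variables outside `C` to `x₀` enumerates each assignment of `C` once, so for a
factor `φ` local to `C` this is its marginal on `T` at `x`. -/
def marginal (x₀ : ∀ i, D i) (C : Finset ι) (φ : (∀ i, D i) → M) (T : Finset ι)
    (x : ∀ i, D i) : M :=
  ∑ y ∈ clampedAssignments x₀ C T x, φ y

/-- Over `Fin n` the filter in the statement is decided by `Nat.decidableForallFin`, which is
not definitionally the instance inside `marginal`. -/
theorem marginal_eq_sum_filter (x₀ : ∀ i, D i) (C : Finset ι) (φ : (∀ i, D i) → M)
    (T : Finset ι) (x : ∀ i, D i)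
    [DecidablePred fun y : ∀ i, D i => (∀ j ∈ T, y j = x j) ∧ ∀ j, j ∉ C → y j = x₀ j] :
    marginal x₀ C φ T x =
      ∑ y ∈ univ.filter fun y => (∀ j ∈ T, y j = x j) ∧ ∀ j, j ∉ C → y j = x₀ j, φ y := by
  rw [marginal, clampedAssignments]
  congr!

theorem filter_piecewise_eq_clampedAssignments {x₀ x z : ∀ i, D i} {C S T : Finset ι}
    (hTS : T ⊆ S) (hz : z ∈ clampedAssignments x₀ S T x) :
    {y ∈ clampedAssignments x₀ C T x | S.piecewise y x₀ = z} = clampedAssignments x₀ C S z := by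
  simp only [clampedAssignments, mem_filter, mem_univ, true_and] at hz
  ext y
  simp only [clampedAssignments, mem_filter, mem_univ, true_and]
  constructor
  · rintro ⟨⟨-, hyC⟩, rfl⟩
    exact ⟨fun j hj => (piecewise_eq_of_mem _ _ _ hj).symm, hyC⟩
  · rintro ⟨hyS, hyC⟩
    refine ⟨⟨fun j hj => (hyS j (hTS hj)).trans (hz.1 j hj), hyC⟩, funext fun j => ?_⟩
    by_cases hj : j ∈ S
    · rw [piecewise_eq_of_mem _ _ _ hj, hyS j hj]
    · rw [piecewise_eq_of_notMem _ _ _ hj, hz.2 j hj]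

theorem marginal_eq_sum_marginal {x₀ : ∀ i, D i} {C S T : Finset ι} (φ : (∀ i, D i) → M)
    (hTS : T ⊆ S) (x : ∀ i, D i) :
    marginal x₀ C φ T x = ∑ z ∈ clampedAssignments x₀ S T x, marginal x₀ C φ S z := by
  have hmaps : ∀ y ∈ clampedAssignments x₀ C T x,
      S.piecewise y x₀ ∈ clampedAssignments x₀ S T x := by
    intro y hy
    simp only [clampedAssignments, mem_filter, mem_univ, true_and] at hy ⊢
    exact ⟨fun j hj => (piecewise_eq_of_mem _ _ _ (hTS hj)).trans (hy.1 j hj),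
      fun j hj => piecewise_eq_of_notMem _ _ _ hj⟩
  rw [marginal, ← sum_fiberwise_of_maps_to hmaps]
  exact sum_congr rfl fun z hz => by rw [filter_piecewise_eq_clampedAssignments hTS hz, marginal]

theorem marginal_eq_of_subset {x₀ : ∀ i, D i} {C C' S T : Finset ι}
    {φ ψ : (∀ i, D i) → M} (hTS : T ⊆ S)
    (h : ∀ z, marginal x₀ C φ S z = marginal x₀ C' ψ S z) (x : ∀ i, D i) :
    marginal x₀ C φ T x = marginal x₀ C' ψ T x := by
  rw [marginal_eq_sum_marginal φ hTS, marginal_eq_sum_marginal ψ hTS]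
  exact sum_congr rfl fun z _ => h z

end Marginal

theorem calibrated_clique_tree_marginals_agree_general
    (n : ℕ) (D : Fin n → Type) [∀ i, Fintype (D i)]
    [∀ i, DecidableEq (D i)]
    (V : Type)
    (G : SimpleGraph V) (hG : G.IsTree)
    (Cl : V → Finset (Fin n))
    (hrip : ∀ i : Fin n, (G.induce {v : V | i ∈ Cl v}).Connected)
    (x₀ : ∀ j, D j)
    (β : V → (∀ j, D j) → NNReal)
    (hcal : ∀ u v : V, G.Adj u v → ∀ x : ∀ j, D j,
      (∑ y ∈ Finset.univ.filter
          (fun y : ∀ j, D j =>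
            (∀ j ∈ Cl u ∩ Cl v, y j = x j) ∧ ∀ j, j ∉ Cl u → y j = x₀ j),
        β u y)
        =
      ∑ y ∈ Finset.univ.filter
          (fun y : ∀ j, D j =>
            (∀ j ∈ Cl u ∩ Cl v, y j = x j) ∧ ∀ j, j ∉ Cl v → y j = x₀ j),
        β v y) :
    ∀ (u w : V) (T : Finset (Fin n)), T ⊆ Cl u ∩ Cl w → ∀ x : ∀ j, D j,
      (∑ y ∈ Finset.univ.filter
          (fun y : ∀ j, D j =>
            (∀ j ∈ T, y j = x j) ∧ ∀ j, j ∉ Cl u → y j = x₀ j),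
        β u y)
        =
      ∑ y ∈ Finset.univ.filter
          (fun y : ∀ j, D j =>
            (∀ j ∈ T, y j = x j) ∧ ∀ j, j ∉ Cl w → y j = x₀ j),
        β w y := by
  intro u w T hT x
  set s : Set V := ⋂ i : T, {v | (i : Fin n) ∈ Cl v}
  have mem_s : ∀ {v}, v ∈ s ↔ T ⊆ Cl v := by simp [s, Finset.subset_iff]
  have hs : (G.induce s).Preconnected :=
    hG.preconnected_induce_iInter fun i => (hrip i).preconnected
  have hu : u ∈ s := mem_s.mpr (hT.trans inter_subset_left)
  have hw : w ∈ s := mem_s.mpr (hT.trans inter_subset_right)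
  rw [← marginal_eq_sum_filter, ← marginal_eq_sum_filter]
  refine (hs ⟨u, hu⟩ ⟨w, hw⟩).eq_of_forall_adj_s10
    (f := fun v : s => marginal x₀ (Cl v) (β v) T x) fun a b hab => ?_
  refine marginal_eq_of_subset (subset_inter (mem_s.mp a.2) (mem_s.mp b.2)) (fun z => ?_) x
  rw [marginal_eq_sum_filter, marginal_eq_sum_filter]
  exact hcal a b hab z

/-- In a calibrated clique tree satisfying the running intersection property, any
two cliques agree on the marginals of their shared variables: the marginal of a
variable (or any set of shared variables) can be obtained from any clique
containing it. -/
theorem calibrated_clique_tree_marginals_agree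
    (n : ℕ) (D : Fin n → Type) [∀ i, Fintype (D i)] [∀ i, Nonempty (D i)]
    [∀ i, DecidableEq (D i)]
    (V : Type) [Fintype V] [Nonempty V]
    (G : SimpleGraph V) (hG : G.IsTree)
    (Cl : V → Finset (Fin n))
    (hrip : ∀ i : Fin n, (G.induce {v : V | i ∈ Cl v}).Connected)
    (x₀ : ∀ j, D j)
    (β : V → (∀ j, D j) → NNReal)
    (hβ : ∀ v : V, IsLocal (Cl v) (β v))
    (hcal : ∀ u v : V, G.Adj u v → ∀ x : ∀ j, D j,
      (∑ y ∈ Finset.univ.filter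
          (fun y : ∀ j, D j =>
            (∀ j ∈ Cl u ∩ Cl v, y j = x j) ∧ ∀ j, j ∉ Cl u → y j = x₀ j),
        β u y)
        =
      ∑ y ∈ Finset.univ.filter
          (fun y : ∀ j, D j =>
            (∀ j ∈ Cl u ∩ Cl v, y j = x j) ∧ ∀ j, j ∉ Cl v → y j = x₀ j),
        β v y) :
    ∀ (u w : V) (T : Finset (Fin n)), T ⊆ Cl u ∩ Cl w → ∀ x : ∀ j, D j,
      (∑ y ∈ Finset.univ.filter
          (fun y : ∀ j, D j =>
            (∀ j ∈ T, y j = x j) ∧ ∀ j, j ∉ Cl u → y j = x₀ j),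
        β u y)
        =
      ∑ y ∈ Finset.univ.filter
          (fun y : ∀ j, D j =>
            (∀ j ∈ T, y j = x j) ∧ ∀ j, j ∉ Cl w → y j = x₀ j),
        β w y :=
  calibrated_clique_tree_marginals_agree_general n D V G hG Cl hrip x₀ β hcal
end

section
/- Let C ⊆ Fin n be a Finset of variables, L ⊆ C a Finset of link variables, and x₀ : ∀ j, D j a fixed reference assignment. Let β : (∀ j, D j) → ℝ≥0 be local to C, and define its marginal over the link variables by m x = the sum over all assignments y satisfying y j = x j for all j ∈ L and y j = x₀ j for all j ∉ C of β y. Let m' : (∀ j, D j) → ℝ≥0 be local to L (the back-propagated target marginal) and assume m x = 0 implies m' x = 0 for every assignment x. Define the updated belief β' x = β x * m' x / m x, with division in ℝ≥0 (where a / 0 = 0). Then: (1) the updated belief has the target link marginal, i.e. for every assignment x, the sum over all assignments y satisfying y j = x j for all j ∈ L and y j = x₀ j for all j ∉ C of β' y equals m' x; and (2) the conditional distribution of the remaining clique variables given the link variables is preserved, i.e. for every assignment x, β' x * m x = β x * m' x. -/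
/-
On a fibre of the link variables, `m` and `m'` are constant, so the update multiplies `β` by the
single factor `m' x / m x` there; summing, the fibre total `m x` cancels against the denominator.
Where `m x = 0` both sides vanish, because `m' x = 0` as well.
-/

namespace BeliefUpdate

variable {n : ℕ} {D : Fin n → Type} [∀ i, Fintype (D i)] [∀ i, DecidableEq (D i)]

def linkFibre (L C : Finset (Fin n)) (x₀ x : ∀ j, D j) : Finset (∀ j, D j) :=
  Finset.univ.filter fun y => (∀ j ∈ L, y j = x j) ∧ ∀ j, j ∉ C → y j = x₀ j

variable {L C : Finset (Fin n)} {x₀ : ∀ j, D j}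

theorem agree_of_mem_linkFibre {x y : ∀ j, D j} (hy : y ∈ linkFibre L C x₀ x) :
    ∀ j ∈ L, y j = x j :=
  (Finset.mem_filter.mp hy).2.1

theorem linkFibre_congr {x x' : ∀ j, D j} (h : ∀ j ∈ L, x j = x' j) :
    linkFibre L C x₀ x = linkFibre L C x₀ x' :=
  Finset.filter_congr fun y _ => by
    refine and_congr_left' (forall₂_congr fun j hj => ?_)
    rw [h j hj]

end BeliefUpdate

open BeliefUpdate in
theorem belief_update_correct_general
    (n : ℕ) (D : Fin n → Type) [∀ i, Fintype (D i)]
    [∀ i, DecidableEq (D i)]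
    (C L : Finset (Fin n)) (x₀ : ∀ j, D j)
    (β : (∀ j, D j) → NNReal)
    (m : (∀ j, D j) → NNReal)
    (hm : ∀ x : ∀ j, D j,
      m x = ∑ y ∈ Finset.univ.filter
          (fun y : ∀ j, D j =>
            (∀ j ∈ L, y j = x j) ∧ ∀ j, j ∉ C → y j = x₀ j),
        β y)
    (m' : (∀ j, D j) → NNReal) (hm' : IsLocal L m')
    (hzero : ∀ x : ∀ j, D j, m x = 0 → m' x = 0)
    (β' : (∀ j, D j) → NNReal)
    (hβ' : ∀ x : ∀ j, D j, β' x = β x * m' x / m x) :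
    (∀ x : ∀ j, D j,
      (∑ y ∈ Finset.univ.filter
          (fun y : ∀ j, D j =>
            (∀ j ∈ L, y j = x j) ∧ ∀ j, j ∉ C → y j = x₀ j),
        β' y) = m' x)
    ∧
    (∀ x : ∀ j, D j, β' x * m x = β x * m' x) := by
  have hmL : IsLocal L m := fun x y h => by
    rw [hm x, hm y]
    exact congrArg (∑ z ∈ ·, β z) (linkFibre_congr h)
  refine ⟨fun x => ?_, fun x => ?_⟩
  · calc ∑ y ∈ linkFibre L C x₀ x, β' y
        = ∑ y ∈ linkFibre L C x₀ x, β y * m' x / m x := by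
          refine Finset.sum_congr rfl fun y hy => ?_
          have hyx := agree_of_mem_linkFibre hy
          rw [hβ', hm' y x hyx, hmL y x hyx]
      _ = m x * m' x / m x := by rw [← Finset.sum_div, ← Finset.sum_mul, hm x, linkFibre]
      _ = m' x := mul_div_cancel_left_of_imp (hzero x)
  · rw [hβ']
    exact div_mul_cancel_of_imp fun h => by rw [hzero x h, mul_zero]

/-- Correctness of the belief-update step: replacing the clique belief `β` by
`β · m' / m`, where `m` is the current marginal of `β` over the link variables `L`
and `m'` is the back-propagated target marginal, (1) gives a belief whose marginal
over the link variables is `m'`, and (2) preserves the conditional distribution of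
the remaining clique variables given the link variables. -/
theorem belief_update_correct
    (n : ℕ) (D : Fin n → Type) [∀ i, Fintype (D i)] [∀ i, Nonempty (D i)]
    [∀ i, DecidableEq (D i)]
    (C L : Finset (Fin n)) (hL : L ⊆ C) (x₀ : ∀ j, D j)
    (β : (∀ j, D j) → NNReal) (hβ : IsLocal C β)
    (m : (∀ j, D j) → NNReal)
    (hm : ∀ x : ∀ j, D j,
      m x = ∑ y ∈ Finset.univ.filter
          (fun y : ∀ j, D j =>
            (∀ j ∈ L, y j = x j) ∧ ∀ j, j ∉ C → y j = x₀ j),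
        β y)
    (m' : (∀ j, D j) → NNReal) (hm' : IsLocal L m')
    (hzero : ∀ x : ∀ j, D j, m x = 0 → m' x = 0)
    (β' : (∀ j, D j) → NNReal)
    (hβ' : ∀ x : ∀ j, D j, β' x = β x * m' x / m x) :
    (∀ x : ∀ j, D j,
      (∑ y ∈ Finset.univ.filter
          (fun y : ∀ j, D j =>
            (∀ j ∈ L, y j = x j) ∧ ∀ j, j ∉ C → y j = x₀ j),
        β' y) = m' x)
    ∧
    (∀ x : ∀ j, D j, β' x * m x = β x * m' x) :=
  belief_update_correct_general n D C L x₀ β m hm m' hm' hzero β' hβ'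
end
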